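/- arXiv:2301.11974 — 2 statements merged into one kernel-verified Lean document; each statement's English description precedes it below -/
import Mathlib

section
/- Let s ∈ ℝ^p be a reference point with s_k < z_k(x) for all x ∈ X and all k, and let x* ∈ X be efficient. Define weights w_k = 1 / (z_k(x*) − s_k) > 0 for k = 1,…,p. Then x* minimizes the weighted Tchebycheff scalarization x ↦ max_{k=1,…,p} w_k (z_k(x) − s_k) over X; i.e., every efficient solution can be obtained as an optimal solution of a weighted Tchebycheff scalarization for a suitable choice of weights. -/
/-!
With `w_k = 1 / (z_k(x*) - s_k)` every term of the scalarization at `x*` equals `1`. If some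
`x ∈ X` had a smaller value, then `w_k (z_k(x) - s_k) < 1`, i.e. `z_k(x) < z_k(x*)`, for every `k`:
`x` would strictly dominate, hence dominate, the efficient solution `x*`.
-/

namespace Finset

variable {ι : Type*} {t : Finset ι} (ht : t.Nonempty)

theorem sup'_one_div_mul_self_le_one (a : ι → ℝ) : t.sup' ht (fun k => 1 / a k * a k) ≤ 1 :=
  sup'_le ht _ fun k _ => by
    rcases eq_or_ne (a k) 0 with h | h
    · simp [h]
    · rw [one_div_mul_cancel h]

theorem lt_of_sup'_one_div_mul_lt_one {a b : ι → ℝ} (ha : ∀ k ∈ t, 0 < a k)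
    (h : t.sup' ht (fun k => 1 / a k * b k) < 1) : ∀ k ∈ t, b k < a k := fun k hk => by
  have hk' := (sup'_lt_iff ht).1 h k hk
  rwa [one_div_mul_eq_div, div_lt_one (ha k hk)] at hk'

end Finset

/-- Let the reference point `s` satisfy `s_k < z_k(x)` for all `x ∈ X` and
all `k`, and let `x* ∈ X` be efficient.  With the weights `w_k = 1 / (z_k(x*) - s_k)`,
the solution `x*` minimizes the weighted Tchebycheff scalarization
`x ↦ max_k w_k (z_k(x) - s_k)` over `X`. -/
theorem efficient_is_weighted_tchebycheff_optimal {α : Type*}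
    (X : Finset α) (p : ℕ) (hp : 2 ≤ p)
    (z : α → Fin p → ℝ) (s : Fin p → ℝ) (hs : ∀ x ∈ X, ∀ k, s k < z x k)
    (xstar : α) (hxstar : xstar ∈ X)
    (heff : ¬ ∃ xhat ∈ X, (∀ k, z xhat k ≤ z xstar k) ∧ z xhat ≠ z xstar) :
    ∀ x ∈ X,
      (Finset.univ.sup' (Finset.univ_nonempty_iff.mpr ⟨⟨0, by omega⟩⟩)
        fun k => (1 / (z xstar k - s k)) * (z xstar k - s k)) ≤
      (Finset.univ.sup' (Finset.univ_nonempty_iff.mpr ⟨⟨0, by omega⟩⟩)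
        fun k => (1 / (z xstar k - s k)) * (z x k - s k)) := by
  intro x hx
  have : Nonempty (Fin p) := ⟨⟨0, by omega⟩⟩
  refine (Finset.sup'_one_div_mul_self_le_one _ _).trans (not_lt.1 fun hlt => heff ?_)
  have hstrict : StrongLT (z x) (z xstar) := fun k => by
    have := Finset.lt_of_sup'_one_div_mul_lt_one _
      (fun k _ => sub_pos.2 (hs xstar hxstar k)) hlt k (Finset.mem_univ k)
    linarith
  exact ⟨x, hx, hstrict.le, hstrict.lt.ne⟩
end

section
/- Correctness of fathoming by dominance: let Y ⊆ ℝ^p be a nonempty finite set with nondominated set Y_N, let Y' ⊆ Y be the image set of a subproblem, let L ⊆ ℝ^p be a lower bound set for Y' in the sense that for every y ∈ Y' there exists l ∈ L with l ≦ y, and let U ⊆ Y be an incumbent set such that for every l ∈ L there exists u ∈ U with u ≦ l. Then Y' ∩ Y_N ⊆ U; i.e., the subproblem contains no nondominated point that is not already in the incumbent list, so the corresponding node can be fathomed. -/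
/-!
Weak dominance is transitive, so the bounds `L` transfer to the incumbents: every point of `Y'`
is weakly dominated by some `u ∈ U ⊆ Y`. A nondominated point of `Y` is weakly dominated by no
point of `Y` other than itself, hence it is its own incumbent.
-/

section Dominance

variable {α : Type*}

theorem exists_le_of_forall_exists_le [Preorder α] {Y' L U : Set α}
    (hL : ∀ y ∈ Y', ∃ l ∈ L, l ≤ y) (hLU : ∀ l ∈ L, ∃ u ∈ U, u ≤ l) :
    ∀ y ∈ Y', ∃ u ∈ U, u ≤ y := by
  intro y hy
  obtain ⟨l, hl, hly⟩ := hL y hy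
  obtain ⟨u, hu, hul⟩ := hLU l hl
  exact ⟨u, hu, hul.trans hly⟩

theorem minimal_mem_of_not_exists_ne_le [PartialOrder α] {Y : Set α} {y : α} (hy : y ∈ Y)
    (hnd : ¬ ∃ y' ∈ Y, y' ≤ y ∧ y' ≠ y) : Minimal (· ∈ Y) y :=
  ⟨hy, fun y' hy' hle => (not_not.mp fun hne => hnd ⟨y', hy', hle, hne⟩).ge⟩

theorem inter_minimal_subset_of_forall_exists_le [PartialOrder α] {Y Y' L U : Set α}
    (hU : U ⊆ Y) (hL : ∀ y ∈ Y', ∃ l ∈ L, l ≤ y) (hLU : ∀ l ∈ L, ∃ u ∈ U, u ≤ l) :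
    Y' ∩ {y | Minimal (· ∈ Y) y} ⊆ U := by
  rintro y ⟨hy', hmin⟩
  obtain ⟨u, hu, huy⟩ := exists_le_of_forall_exists_le hL hLU y hy'
  exact hmin.eq_of_le (hU hu) huy ▸ hu

end Dominance

theorem fathoming_by_dominance_general (p : ℕ)
    (Y : Finset (Fin p → ℝ))
    (Y' : Set (Fin p → ℝ))
    (L U : Set (Fin p → ℝ)) (hU : U ⊆ ↑Y)
    (hL : ∀ y ∈ Y', ∃ l ∈ L, ∀ k, l k ≤ y k)
    (hLU : ∀ l ∈ L, ∃ u ∈ U, ∀ k, u k ≤ l k) :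
    Y' ∩ {y | y ∈ Y ∧ ¬ ∃ y' ∈ Y, (∀ k, y' k ≤ y k) ∧ y' ≠ y} ⊆ U := by
  rintro y ⟨hy', hyY, hnd⟩
  have hmin : Minimal (· ∈ (Y : Set (Fin p → ℝ))) y := minimal_mem_of_not_exists_ne_le hyY hnd
  exact inter_minimal_subset_of_forall_exists_le hU hL hLU ⟨hy', hmin⟩

/-- correctness of fathoming by dominance: let `Y ⊆ ℝ^p` be a nonempty
finite set with nondominated set `Y_N`, `Y' ⊆ Y` the image set of a subproblem,
`L` a lower bound set for `Y'` (every `y ∈ Y'` is weakly dominated by some `l ∈ L`),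
and `U ⊆ Y` an incumbent set such that every `l ∈ L` is weakly dominated by some
`u ∈ U`.  Then `Y' ∩ Y_N ⊆ U`. -/
theorem fathoming_by_dominance (p : ℕ) (hp : 2 ≤ p)
    (Y : Finset (Fin p → ℝ)) (hY : Y.Nonempty)
    (Y' : Set (Fin p → ℝ)) (hY' : Y' ⊆ ↑Y)
    (L U : Set (Fin p → ℝ)) (hU : U ⊆ ↑Y)
    (hL : ∀ y ∈ Y', ∃ l ∈ L, ∀ k, l k ≤ y k)
    (hLU : ∀ l ∈ L, ∃ u ∈ U, ∀ k, u k ≤ l k) :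
    Y' ∩ {y | y ∈ Y ∧ ¬ ∃ y' ∈ Y, (∀ k, y' k ≤ y k) ∧ y' ≠ y} ⊆ U :=
  fathoming_by_dominance_general p Y Y' L U hU hL hLU
end
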